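/- Let Δ : H → H ⊗ H be the unique K-linear map on the free K-vector space H on forests of planar rooted trees such that Δ(|) = 0 and, in Sweedler notation, Δ(x ≻ y) = x₍₁₎ ⊗ (x₍₂₎ ≻ y) + (x ≻ y₍₁₎) ⊗ y₍₂₎ + x ⊗ y and Δ(x * y) = x₍₁₎ ⊗ (x₍₂₎ * y) + (x * y₍₁₎) ⊗ y₍₂₎ + x ⊗ y for all x, y ∈ H. Then Δ respects the grading by number of leaves: for every forest w with n leaves, Δ(w) lies in the subspace Σ_{p+q=n, p,q ≥ 1} H_p ⊗ H_q of H ⊗ H, where H_m denotes the K-linear span of the forests with exactly m leaves. -/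

import Mathlib

open scoped TensorProduct

/-- Planar rooted trees: a tree is either the leaf `|`, or a grafting of at
least two planar rooted trees (`graft t₁ t₂ rest` represents `[t₁, t₂, rest…]`). -/
inductive PTree : Type
  | leaf : PTree
  | graft (t₁ t₂ : PTree) (rest : List PTree) : PTree

/-- A forest is a nonempty word of planar rooted trees. -/
abbrev Forest : Type := {l : List PTree // l ≠ []}

/-- Grafting of a list of trees (only meaningful on lists of length ≥ 2;
on shorter lists we return a junk value, which is never used). -/
def graftList : List PTree → PTree
  | [] => .leaf
  | [a] => a
  | a :: b :: rest => .graft a b rest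

mutual
/-- Number of leaves of a planar rooted tree. -/
def leavesT : PTree → ℕ
  | .leaf => 1
  | .graft a b rest => leavesT a + leavesT b + leavesL rest

/-- Sum of the numbers of leaves of a list of trees. -/
def leavesL : List PTree → ℕ
  | [] => 0
  | t :: ts => leavesT t + leavesL ts
end

/-- Number of leaves of a forest. -/
def leavesF (w : Forest) : ℕ := leavesL w.1

variable (K : Type*) [Field K]

/-- `H K` is the free `K`-vector space with basis the set of forests of
planar rooted trees. -/
abbrev H : Type _ := Forest →₀ K

/-- The leaf, as a (one-tree) forest. -/
def leafF : Forest := ⟨[PTree.leaf], by simp⟩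

/-- The concatenation product `*`, as a bilinear map on `H K`;
on basis forests it is concatenation of words. -/
noncomputable def mulH : H K →ₗ[K] H K →ₗ[K] H K :=
  Finsupp.lift (H K →ₗ[K] H K) K Forest fun x =>
    Finsupp.lift (H K) K Forest fun y =>
      Finsupp.single ⟨x.1 ++ y.1, by simp [x.2]⟩ 1

/-- The grafting operation `≻` on two basis forests:
`(t₁…tₚ) ≻ (s₁…s_q) = Σ_{k=1}^{q} Σ_{i=0}^{p−1}
t₁…t_{p−(i+1)} [t_{p−i},…,tₚ, s₁,…,s_k] s_{k+1}…s_q`. -/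
noncomputable def succForest (x y : Forest) : H K :=
  ∑ k ∈ Finset.range y.1.length, ∑ i ∈ Finset.range x.1.length,
    Finsupp.single
      ⟨x.1.take (x.1.length - (i + 1)) ++
        (graftList (x.1.drop (x.1.length - (i + 1)) ++ y.1.take (k + 1)) :: y.1.drop (k + 1)),
        by simp⟩ 1

/-- The operation `≻`, as a bilinear map on `H K`. -/
noncomputable def succH : H K →ₗ[K] H K →ₗ[K] H K :=
  Finsupp.lift (H K →ₗ[K] H K) K Forest fun x =>
    Finsupp.lift (H K) K Forest fun y => succForest K x y

/-- A shortcut instance (definitionally the standard one) to help elaboration. -/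
noncomputable instance : Zero (H K ⊗[K] H K) :=
  (inferInstance : AddCommMonoid (H K ⊗[K] H K)).toZero

/-- `Hgr K m` is the homogeneous component of `H K` of degree `m`: the linear span
of the basis forests with exactly `m` leaves. -/
noncomputable def Hgr (m : ℕ) : Submodule K (H K) :=
  Submodule.span K {f : H K | ∃ w : Forest, leavesF w = m ∧ f = Finsupp.single w 1}

/-!
Induction on the number of leaves. Both `*` and `≻` add numbers of leaves, so the
compatibility relation `Δ(xy) = x₍₁₎ ⊗ x₍₂₎y + xy₍₁₎ ⊗ y₍₂₎ + x ⊗ y` puts `Δ(xy)` in the right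
degree once `Δ x` and `Δ y` are. A forest of several trees is the concatenation of its first
tree with the others. A tree `[t₁, t₂, …, tₘ]` is `t₁ ≻ (t₂ … tₘ)` minus forests of at least two
trees with the same number of leaves, which are handled by the concatenation case.
-/

section TensorGrade

variable {R M : Type*} [CommSemiring R] [AddCommMonoid M] [Module R M] (G : ℕ → Submodule R M)

def tensorGrade (n : ℕ) : Submodule R (M ⊗[R] M) :=
  ⨆ (p : ℕ) (q : ℕ) (_ : p + q = n) (_ : 1 ≤ p) (_ : 1 ≤ q),
    Submodule.span R (Set.image2 (fun a b => a ⊗ₜ[R] b) (G p : Set M) (G q : Set M))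

variable {G}

theorem tmul_mem_tensorGrade {p q n : ℕ} (h : p + q = n) (hp : 1 ≤ p) (hq : 1 ≤ q)
    {a b : M} (ha : a ∈ G p) (hb : b ∈ G q) : a ⊗ₜ[R] b ∈ tensorGrade G n :=
  Submodule.mem_iSup_of_mem p <| Submodule.mem_iSup_of_mem q <| Submodule.mem_iSup_of_mem h <|
    Submodule.mem_iSup_of_mem hp <| Submodule.mem_iSup_of_mem hq <|
      Submodule.subset_span (Set.mem_image2_of_mem ha hb)

theorem lTensor_mem_tensorGrade {f : M →ₗ[R] M} {β : ℕ}
    (hf : ∀ q, ∀ v ∈ G q, f v ∈ G (q + β)) {α : ℕ} {u : M ⊗[R] M}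
    (hu : u ∈ tensorGrade G α) : LinearMap.lTensor M f u ∈ tensorGrade G (α + β) := by
  suffices tensorGrade G α ≤ (tensorGrade G (α + β)).comap (LinearMap.lTensor M f) from this hu
  simp only [tensorGrade, iSup_le_iff, Submodule.span_le]
  rintro p q rfl hp hq _ ⟨a, ha, b, hb, rfl⟩
  exact tmul_mem_tensorGrade (by omega) hp (by omega) ha (hf q b hb)

theorem rTensor_mem_tensorGrade {f : M →ₗ[R] M} {α : ℕ}
    (hf : ∀ p, ∀ v ∈ G p, f v ∈ G (α + p)) {β : ℕ} {u : M ⊗[R] M}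
    (hu : u ∈ tensorGrade G β) : LinearMap.rTensor M f u ∈ tensorGrade G (α + β) := by
  suffices tensorGrade G β ≤ (tensorGrade G (α + β)).comap (LinearMap.rTensor M f) from this hu
  simp only [tensorGrade, iSup_le_iff, Submodule.span_le]
  rintro p q rfl hp hq _ ⟨a, ha, b, hb, rfl⟩
  exact tmul_mem_tensorGrade (by omega) (by omega) hq (hf p a ha) hb

/-- The compatibility `Δ(xy) = x₍₁₎ ⊗ x₍₂₎y + xy₍₁₎ ⊗ y₍₂₎ + x ⊗ y` of the reduced coproduct of
a unital infinitesimal bialgebra (Loday–Ronco). -/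
def IsInfinitesimal (Δ : M →ₗ[R] M ⊗[R] M) (B : M →ₗ[R] M →ₗ[R] M) : Prop :=
  ∀ x y, Δ (B x y)
    = LinearMap.lTensor M (B.flip y) (Δ x) + LinearMap.rTensor M (B x) (Δ y) + x ⊗ₜ[R] y

theorem IsInfinitesimal.apply_mem_tensorGrade {Δ : M →ₗ[R] M ⊗[R] M} {B : M →ₗ[R] M →ₗ[R] M}
    (hΔ : IsInfinitesimal Δ B) (hB : ∀ p q, Submodule.map₂ B (G p) (G q) ≤ G (p + q))
    {α β : ℕ} (hα : 1 ≤ α) (hβ : 1 ≤ β) {a b : M} (ha : a ∈ G α) (hb : b ∈ G β)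
    (hΔa : Δ a ∈ tensorGrade G α) (hΔb : Δ b ∈ tensorGrade G β) :
    Δ (B a b) ∈ tensorGrade G (α + β) := by
  rw [hΔ]
  refine Submodule.add_mem _ (Submodule.add_mem _ ?_ ?_) (tmul_mem_tensorGrade rfl hα hβ ha hb)
  · exact lTensor_mem_tensorGrade
      (fun q v hv => hB q β (Submodule.apply_mem_map₂ B hv hb : B v b ∈ _)) hΔa
  · exact rTensor_mem_tensorGrade
      (fun p v hv => hB α p (Submodule.apply_mem_map₂ B ha hv : B a v ∈ _)) hΔb

end TensorGrade

section Leaves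

theorem leavesT_pos (t : PTree) : 1 ≤ leavesT t := by
  cases t with
  | leaf => simp [leavesT]
  | graft a b rest => have := leavesT_pos a; simp only [leavesT]; omega

theorem leavesL_append (l l' : List PTree) : leavesL (l ++ l') = leavesL l + leavesL l' := by
  induction l with
  | nil => simp [leavesL]
  | cons t ts ih => simp only [List.cons_append, leavesL, ih]; ring

theorem leavesL_take_add_drop (l : List PTree) (k : ℕ) :
    leavesL (l.take k) + leavesL (l.drop k) = leavesL l := by
  rw [← leavesL_append, List.take_append_drop]

theorem leavesL_pos {l : List PTree} (h : l ≠ []) : 1 ≤ leavesL l := by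
  cases l with
  | nil => contradiction
  | cons t ts => have := leavesT_pos t; simp only [leavesL]; omega

theorem leavesT_graftList {l : List PTree} (h : l ≠ []) : leavesT (graftList l) = leavesL l := by
  match l with
  | [a] => simp [graftList, leavesL]
  | a :: b :: rest => simp only [graftList, leavesT, leavesL]; ring

theorem leavesF_pos (w : Forest) : 1 ≤ leavesF w := leavesL_pos w.2

@[simp]
theorem leavesF_cons (t : PTree) (l : List PTree) (h : t :: l ≠ []) :
    leavesF ⟨t :: l, h⟩ = leavesT t + leavesL l := rfl

end Leaves

section Grading

variable {K}

theorem single_mem_Hgr (w : Forest) : Finsupp.single w (1 : K) ∈ Hgr K (leavesF w) :=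
  Submodule.subset_span ⟨w, rfl, rfl⟩

theorem map₂_Hgr_le {B : H K →ₗ[K] H K →ₗ[K] H K}
    (hB : ∀ x y : Forest, B (Finsupp.single x 1) (Finsupp.single y 1)
      ∈ Hgr K (leavesF x + leavesF y)) (p q : ℕ) :
    Submodule.map₂ B (Hgr K p) (Hgr K q) ≤ Hgr K (p + q) := by
  rw [Hgr, Hgr, Submodule.map₂_span_span, Submodule.span_le]
  rintro _ ⟨_, ⟨x, rfl, rfl⟩, _, ⟨y, rfl, rfl⟩, rfl⟩
  exact hB x y

theorem mulH_single (x y : Forest) :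
    mulH K (Finsupp.single x 1) (Finsupp.single y 1)
      = Finsupp.single ⟨x.1 ++ y.1, by simp [x.2]⟩ 1 := by
  simp [mulH, Finsupp.lift_apply, Finsupp.sum_single_index]

theorem succH_single (x y : Forest) :
    succH K (Finsupp.single x 1) (Finsupp.single y 1) = succForest K x y := by
  simp [succH, Finsupp.lift_apply, Finsupp.sum_single_index]

theorem map₂_mulH_Hgr_le (p q : ℕ) :
    Submodule.map₂ (mulH K) (Hgr K p) (Hgr K q) ≤ Hgr K (p + q) := by
  refine map₂_Hgr_le (fun x y => ?_) p q
  rw [mulH_single]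
  refine Submodule.subset_span ⟨_, ?_, rfl⟩
  simp [leavesF, leavesL_append]

theorem map₂_succH_Hgr_le (p q : ℕ) :
    Submodule.map₂ (succH K) (Hgr K p) (Hgr K q) ≤ Hgr K (p + q) := by
  refine map₂_Hgr_le (fun x y => ?_) p q
  rw [succH_single]
  refine Submodule.sum_mem _ fun k _ => Submodule.sum_mem _ fun i hi => ?_
  refine Submodule.subset_span ⟨_, ?_, rfl⟩
  have hdrop : x.1.drop (x.1.length - (i + 1)) ≠ [] := by
    simp only [Finset.mem_range] at hi
    simp only [ne_eq, List.drop_eq_nil_iff]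
    omega
  simp only [leavesF, leavesL_append, leavesL]
  rw [leavesT_graftList (by simp [hdrop]), leavesL_append]
  have := leavesL_take_add_drop x.1 (x.1.length - (i + 1))
  have := leavesL_take_add_drop y.1 (k + 1)
  omega

theorem succForest_singleton_cons (t₁ t₂ : PTree) (rest : List PTree) :
    succForest K ⟨[t₁], by simp⟩ ⟨t₂ :: rest, by simp⟩
      = ∑ k ∈ Finset.range (rest.length + 1),
          Finsupp.single ⟨PTree.graft t₁ t₂ (rest.take k) :: rest.drop k, by simp⟩ (1 : K) := by
  simp only [succForest, List.length_cons, Finset.sum_range_one, Nat.sub_self, List.take_zero,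
    List.drop_zero, List.nil_append, List.singleton_append, List.take_succ_cons,
    List.drop_succ_cons, graftList, List.length_nil, Nat.zero_add]

end Grading

section Coproduct

variable {K}

def IsGradedAt (Δ : H K →ₗ[K] H K ⊗[K] H K) (w : Forest) : Prop :=
  Δ (Finsupp.single w 1) ∈ tensorGrade (Hgr K) (leavesF w)

variable {Δ : H K →ₗ[K] H K ⊗[K] H K}

theorem isGradedAt_cons (hmul : IsInfinitesimal Δ (mulH K)) {t : PTree} {l : List PTree}
    (hl : l ≠ []) (ht : IsGradedAt Δ ⟨[t], by simp⟩) (hl' : IsGradedAt Δ ⟨l, hl⟩) :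
    IsGradedAt Δ ⟨t :: l, by simp⟩ := by
  have := hmul.apply_mem_tensorGrade map₂_mulH_Hgr_le (leavesF_pos _) (leavesF_pos _)
    (single_mem_Hgr _) (single_mem_Hgr _) ht hl'
  rwa [mulH_single] at this

theorem isGradedAt_graft (hsucc : IsInfinitesimal Δ (succH K)) {t₁ t₂ : PTree}
    {rest : List PTree} (h₁ : IsGradedAt Δ ⟨[t₁], by simp⟩)
    (h₂ : IsGradedAt Δ ⟨t₂ :: rest, by simp⟩)
    (hk : ∀ k < rest.length,
      IsGradedAt Δ ⟨PTree.graft t₁ t₂ (rest.take k) :: rest.drop k, by simp⟩) :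
    IsGradedAt Δ ⟨[PTree.graft t₁ t₂ rest], by simp⟩ := by
  have hsum := hsucc.apply_mem_tensorGrade map₂_succH_Hgr_le (leavesF_pos _) (leavesF_pos _)
    (single_mem_Hgr _) (single_mem_Hgr _) h₁ h₂
  rw [succH_single, succForest_singleton_cons, Finset.sum_range_succ, map_add, map_sum] at hsum
  simp only [List.take_length, List.drop_length] at hsum
  have hleaves : ∀ k, leavesF ⟨PTree.graft t₁ t₂ (rest.take k) :: rest.drop k, by simp⟩
      = leavesF ⟨[t₁], by simp⟩ + leavesF ⟨t₂ :: rest, by simp⟩ := fun k => by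
    have := leavesL_take_add_drop rest k
    simp only [leavesF_cons, leavesT, leavesL]
    omega
  have hw := hleaves rest.length
  simp only [List.take_length, List.drop_length] at hw
  rw [IsGradedAt, hw]
  have hlower : ∑ k ∈ Finset.range rest.length,
      Δ (Finsupp.single ⟨PTree.graft t₁ t₂ (rest.take k) :: rest.drop k, by simp⟩ 1)
      ∈ tensorGrade (Hgr K) (leavesF ⟨[t₁], by simp⟩ + leavesF ⟨t₂ :: rest, by simp⟩) := by
    refine Submodule.sum_mem _ fun k hk' => ?_
    have := hk k (Finset.mem_range.1 hk')
    rwa [IsGradedAt, hleaves] at this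
  -- `tensorGrade` carries the semiring instances of `H K ⊗ H K`; `sub_mem` needs them unified
  -- with the ring ones, which succeeds only with the ambient module given explicitly.
  convert @Submodule.sub_mem K (H K ⊗[K] H K) _ _ _ _ _ _ hsum hlower using 1
  exact (add_sub_cancel_left (_ : H K ⊗[K] H K) _).symm

theorem isGradedAt_of_isInfinitesimal (h0 : Δ (Finsupp.single leafF 1) = 0)
    (hsucc : IsInfinitesimal Δ (succH K)) (hmul : IsInfinitesimal Δ (mulH K)) (w : Forest) :
    IsGradedAt Δ w := by
  induction hn : leavesF w using Nat.strong_induction_on generalizing w with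
  | _ n IH =>
  have hcons : ∀ (t : PTree) (l : List PTree) (hl : l ≠ []), leavesT t + leavesL l = n →
      IsGradedAt Δ ⟨t :: l, by simp⟩ := fun t l hl htl => by
    have := leavesT_pos t
    have := leavesL_pos hl
    exact isGradedAt_cons hmul hl (IH _ (by simp [leavesL]; omega) _ rfl)
      (IH _ (by simp [leavesF]; omega) _ rfl)
  obtain ⟨_ | ⟨t, _ | ⟨t', rest⟩⟩, hw⟩ := w
  · contradiction
  · cases t with
    | leaf =>
      rw [IsGradedAt, show (⟨[PTree.leaf], hw⟩ : Forest) = leafF from rfl, h0]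
      exact Submodule.zero_mem _
    | graft t₁ t₂ rest =>
      simp only [leavesF_cons, leavesT, leavesL] at hn
      have := leavesT_pos t₁
      have := leavesT_pos t₂
      refine isGradedAt_graft hsucc (IH _ (by simp [leavesL]; omega) _ rfl)
        (IH _ (by simp; omega) _ rfl) fun k hk => hcons _ _ (by simpa using hk) ?_
      have := leavesL_take_add_drop rest k
      simp only [leavesT]
      omega
  · exact hcons t _ (List.cons_ne_nil t' rest) hn

end Coproduct

/-- `Δ` respects the grading by the number of leaves: for a
forest `w` with `n` leaves, `Δ(w)` lies in `Σ_{p+q=n, p,q ≥ 1} H_p ⊗ H_q ⊆ H ⊗ H`. -/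
theorem stmt7 (K : Type*) [Field K] (Δ : H K →ₗ[K] H K ⊗[K] H K)
    (h0 : Δ (Finsupp.single leafF 1) = 0)
    (hsucc : ∀ x y : H K, Δ (succH K x y)
        = LinearMap.lTensor (H K) ((succH K).flip y) (Δ x)
          + LinearMap.rTensor (H K) (succH K x) (Δ y) + x ⊗ₜ[K] y)
    (hmul : ∀ x y : H K, Δ (mulH K x y)
        = LinearMap.lTensor (H K) ((mulH K).flip y) (Δ x)
          + LinearMap.rTensor (H K) (mulH K x) (Δ y) + x ⊗ₜ[K] y) :
    ∀ w : Forest, Δ (Finsupp.single w (1 : K)) ∈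
      ⨆ (p : ℕ) (q : ℕ) (_ : p + q = leavesF w) (_ : 1 ≤ p) (_ : 1 ≤ q),
        Submodule.span K
          (Set.image2 (fun a b => a ⊗ₜ[K] b) (Hgr K p : Set (H K)) (Hgr K q : Set (H K))) := by
  exact isGradedAt_of_isInfinitesimal h0 hsucc hmul
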